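/- arXiv:1802.07385 — 2 statements merged into one kernel-verified Lean document; each statement's English description precedes it below -/
import Mathlib

section
/- An economy given by a nonnegative production matrix a vanishes (the total amount X(t) = Σ_i x_i(t) tends to 0 as t → ∞) under every mechanism if and only if every directed simple cycle in the weighted digraph of a is bad, i.e., has product of weights strictly less than 1. -/
open Filter

namespace ExpandingEconomy

/-- A (simple, directed) cycle: a nonempty list of distinct players, considered cyclically. -/
def IsCycle {n : ℕ} (C : List (Fin n)) : Prop := C ≠ [] ∧ C.Nodup

/-- Product over the edges of a cycle `C` of `g successor predecessor`:
each player in `C` produces from the good of its predecessor in `C`. -/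
noncomputable def cycleEdgeProd {n : ℕ} (C : List (Fin n)) (g : Fin n → Fin n → ℝ) : ℝ :=
  ∏ m : Fin C.length,
    g (C.get ⟨((m : ℕ) + 1) % C.length,
        Nat.mod_lt _ (Nat.lt_of_le_of_lt (Nat.zero_le _) m.isLt)⟩)
      (C.get m)

/-- The product of the production coefficients along a cycle. -/
noncomputable def cycleProd {n : ℕ} (a : Fin n → Fin n → ℝ) (C : List (Fin n)) : ℝ :=
  cycleEdgeProd C a

/-- A good cycle: the product of weights along it is strictly greater than one. -/
def IsGoodCycle {n : ℕ} (a : Fin n → Fin n → ℝ) (C : List (Fin n)) : Prop :=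
  IsCycle C ∧ 1 < cycleProd a C

/-- `(i, j)` is an edge of the cycle `C`: `j` is the predecessor of `i` in `C`. -/
def IsEdgeOf {n : ℕ} (C : List (Fin n)) (i j : Fin n) : Prop :=
  ∃ m : Fin C.length, C.get m = j ∧
    C.get ⟨((m : ℕ) + 1) % C.length,
      Nat.mod_lt _ (Nat.lt_of_le_of_lt (Nat.zero_le _) m.isLt)⟩ = i

/-- Geometric mean of a cycle (the `k`-th root of its product, `k` the length). -/
noncomputable def geoMean {n : ℕ} (a : Fin n → Fin n → ℝ) (C : List (Fin n)) : ℝ :=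
  cycleProd a C ^ ((C.length : ℝ)⁻¹)

/-- A best cycle: one whose geometric mean is maximal among all cycles. -/
def IsBestCycle {n : ℕ} (a : Fin n → Fin n → ℝ) (C : List (Fin n)) : Prop :=
  IsCycle C ∧ ∀ C', IsCycle C' → geoMean a C' ≤ geoMean a C

/-- `C` is the unique best cycle (up to rotation). -/
def UniqueBestCycle {n : ℕ} (a : Fin n → Fin n → ℝ) (C : List (Fin n)) : Prop :=
  IsBestCycle a C ∧ ∀ C', IsBestCycle a C' → C'.IsRotated C

/-- The production matrix is nonnegative. -/
def Nonneg {n : ℕ} (a : Fin n → Fin n → ℝ) : Prop := ∀ i j, 0 ≤ a i j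

/-- The economy is strongly connected: the digraph with an edge `j → i`
whenever `a i j > 0` is strongly connected. -/
def StronglyConnected {n : ℕ} (a : Fin n → Fin n → ℝ) : Prop :=
  ∀ i j : Fin n, Relation.ReflTransGen (fun u v => 0 < a v u) i j

/-- A mechanism: splitting fractions are nonnegative and sum to at most one on each good. -/
def IsMechanism {n : ℕ} (β : ℕ → Fin n → Fin n → ℝ) : Prop :=
  (∀ t i j, 0 ≤ β t i j) ∧ (∀ t j, ∑ i, β t i j ≤ 1)

/-- A non-wasteful mechanism: fractions sum to one and useless goods are not allocated. -/
def NonWasteful {n : ℕ} (a : Fin n → Fin n → ℝ) (β : ℕ → Fin n → Fin n → ℝ) : Prop :=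
  (∀ t j, ∑ i, β t i j = 1) ∧ (∀ t i j, a i j = 0 → β t i j = 0)

/-- The amounts evolve under the splitting rules `β`. -/
def MechEvolution {n : ℕ} (a : Fin n → Fin n → ℝ) (β : ℕ → Fin n → Fin n → ℝ)
    (x : ℕ → Fin n → ℝ) : Prop :=
  ∀ t i, x (t + 1) i = ∑ j, a i j * β t i j * x t j

/-- Amount of good `j` received by player `i` at round `t` under trading post. -/
noncomputable def tpY {n : ℕ} (x : ℕ → Fin n → ℝ) (b : ℕ → Fin n → Fin n → ℝ)
    (t : ℕ) (i j : Fin n) : ℝ :=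
  if 0 < b t i j then (b t i j / ∑ k, b t k j) * x t j else 0

/-- Budget of a player: `B i (t+1) = ∑ k, b t k i`. -/
noncomputable def tpBudget {n : ℕ} (b : ℕ → Fin n → Fin n → ℝ) : ℕ → Fin n → ℝ
  | 0, i => ∑ j, b 0 i j
  | t + 1, i => ∑ k, b t k i

/-- Trading post with proportional bid updates. -/
def TPDynamics {n : ℕ} (a : Fin n → Fin n → ℝ) (x : ℕ → Fin n → ℝ)
    (b : ℕ → Fin n → Fin n → ℝ) : Prop :=
  ∀ t, (∀ i, x (t + 1) i = ∑ j, a i j * tpY x b t i j) ∧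
    (∀ i j, b (t + 1) i j = a i j * tpY x b t i j / x (t + 1) i * tpBudget b (t + 1) i)

/-- Non-degenerate starting configuration, with total money normalized to one. -/
def NonDegenerate {n : ℕ} (a : Fin n → Fin n → ℝ) (x : ℕ → Fin n → ℝ)
    (b : ℕ → Fin n → Fin n → ℝ) : Prop :=
  (∀ i, 0 < x 0 i) ∧ (∀ i j, 0 < b 0 i j ↔ 0 < a i j) ∧ (∑ i, ∑ j, b 0 i j) = 1

/-!
If some cycle `C` has product `≥ 1`, let every good on `C` go entirely to its successor on `C`.
The product of the amounts held along `C` is then multiplied by at least `cycleProd a C` each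
round, so it stays `≥ 1` and the total amount cannot tend to `0`.

Conversely, if every cycle is bad, some `c < 1` keeps every cycle bad for `a / c`. The largest
weight `w j` of a simple path starting at `j` (for `a / c`) satisfies `a i j * w i ≤ c * w j`:
prolonging a simple path from `i` back to `j` either gives a simple path from `j`, or closes a
cycle through `j`, whose weight is `< 1`. As every good is split rather than copied, the
potential `∑ j, w j * x t j` shrinks by the factor `c` every round under any mechanism, and it
dominates the total amount because `w ≥ 1`.
-/

open Topology

section CycleIndex

variable {n : ℕ}

lemma cycleSucc_eq_finRotate {k : ℕ} (m : Fin k) :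
    (⟨((m : ℕ) + 1) % k, Nat.mod_lt _ (Nat.lt_of_le_of_lt (Nat.zero_le _) m.isLt)⟩ : Fin k)
      = finRotate k m := by
  have := m.neZero
  ext
  rw [finRotate_apply, Fin.val_add, Fin.val_one', Nat.add_mod_mod]

lemma cycleEdgeProd_eq_prod_finRotate (C : List (Fin n)) (g : Fin n → Fin n → ℝ) :
    cycleEdgeProd C g = ∏ m, g (C.get (finRotate _ m)) (C.get m) := by
  simp only [cycleEdgeProd, cycleSucc_eq_finRotate]

lemma isEdgeOf_get_finRotate (C : List (Fin n)) (m : Fin C.length) :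
    IsEdgeOf C (C.get (finRotate _ m)) (C.get m) :=
  ⟨m, rfl, by rw [cycleSucc_eq_finRotate]⟩

lemma IsEdgeOf.eq_of_nodup {C : List (Fin n)} (hC : C.Nodup) {i i' j : Fin n}
    (h : IsEdgeOf C i j) (h' : IsEdgeOf C i' j) : i = i' := by
  obtain ⟨m, rfl, rfl⟩ := h
  obtain ⟨m', hm', rfl⟩ := h'
  rw [List.nodup_iff_injective_get.1 hC hm']

end CycleIndex

section PathWeight

variable {α : Type*} (g : α → α → ℝ)

noncomputable def pathWeight : List α → ℝ
  | [] => 1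
  | [_] => 1
  | u :: v :: rest => g v u * pathWeight (v :: rest)

@[simp] lemma pathWeight_cons_cons (u v : α) (rest : List α) :
    pathWeight g (u :: v :: rest) = g v u * pathWeight g (v :: rest) := rfl

lemma pathWeight_nonneg (hg : ∀ i j, 0 ≤ g i j) : ∀ L : List α, 0 ≤ pathWeight g L
  | [] | [_] => zero_le_one
  | _ :: v :: rest => mul_nonneg (hg _ _) (pathWeight_nonneg hg (v :: rest))

lemma pathWeight_append_cons (j : α) (Q : List α) :
    ∀ P : List α, pathWeight g (P ++ j :: Q) = pathWeight g (P ++ [j]) * pathWeight g (j :: Q)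
  | [] => by simp [pathWeight]
  | [u] => by simp [pathWeight]
  | u :: v :: P => by
    have ih := pathWeight_append_cons j Q (v :: P)
    simp only [List.cons_append, pathWeight_cons_cons] at ih ⊢
    rw [ih, mul_assoc]

lemma pathWeight_eq_prod : ∀ (L : List α) (k : ℕ) (hk : L.length = k + 1),
    pathWeight g L = ∏ m : Fin k, g L[(m : ℕ) + 1] L[(m : ℕ)]
  | [_], 0, _ => by simp [pathWeight]
  | u :: v :: rest, k + 1, hk => by
    rw [pathWeight_cons_cons, pathWeight_eq_prod (v :: rest) k (by simpa using hk),
      Fin.prod_univ_succ]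
    simp

end PathWeight

lemma cycleEdgeProd_eq_pathWeight {n : ℕ} (g : Fin n → Fin n → ℝ) (u : Fin n)
    (T : List (Fin n)) : cycleEdgeProd (u :: T) g = pathWeight g (u :: T ++ [u]) := by
  rw [pathWeight_eq_prod g _ (T.length + 1) (by simp), cycleEdgeProd]
  have hget (i : ℕ) (hi : i < T.length + 1) :
      (u :: (T ++ [u]))[i]'(by simp; omega) = (u :: T)[i] :=
    List.getElem_append_left (as := u :: T) hi
  refine Finset.prod_congr rfl fun m _ => ?_
  rcases Fin.eq_castSucc_or_eq_last m with ⟨m, rfl⟩ | rfl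
  · simp [Nat.mod_eq_of_lt (Nat.succ_lt_succ m.isLt), hget]
  · simp [hget]

section Potential

variable {n : ℕ} (g : Fin n → Fin n → ℝ)

noncomputable def potential (j : Fin n) : ℝ :=
  (Finset.univ.filter fun L : {L : List (Fin n) // L.Nodup} => j ∉ L.1).sup'
    ⟨⟨[], List.nodup_nil⟩, by simp⟩ fun L => pathWeight g (j :: L.1)

lemma pathWeight_le_potential {j : Fin n} {L : List (Fin n)} (hL : (j :: L).Nodup) :
    pathWeight g (j :: L) ≤ potential g j := by
  rw [List.nodup_cons] at hL
  unfold potential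
  refine Finset.le_sup' (b := (⟨L, hL.2⟩ : {L : List (Fin n) // L.Nodup}))
    (fun L => pathWeight g (j :: L.1)) ?_
  simpa using hL.1

lemma one_le_potential (j : Fin n) : 1 ≤ potential g j :=
  pathWeight_le_potential g (List.nodup_singleton j)

lemma exists_pathWeight_eq_potential (j : Fin n) :
    ∃ L : List (Fin n), (j :: L).Nodup ∧ potential g j = pathWeight g (j :: L) := by
  obtain ⟨L, hL, hmax⟩ := Finset.exists_mem_eq_sup'
    (s := Finset.univ.filter fun L : {L : List (Fin n) // L.Nodup} => j ∉ L.1)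
    ⟨⟨[], List.nodup_nil⟩, by simp⟩ fun L => pathWeight g (j :: L.1)
  exact ⟨L.1, List.nodup_cons.2 ⟨(Finset.mem_filter.1 hL).2, L.2⟩, hmax⟩

variable {g} (hg : ∀ i j, 0 ≤ g i j) (hcycle : ∀ C, IsCycle C → cycleProd g C ≤ 1)
include hg hcycle

lemma pathWeight_cons_le_potential {j : Fin n} {L : List (Fin n)} (hL : L.Nodup) :
    pathWeight g (j :: L) ≤ potential g j := by
  by_cases hj : j ∈ L
  · -- the walk first returns to `j` after closing the cycle `j :: P`, which can be cut off
    obtain ⟨P, Q, rfl⟩ := List.append_of_mem hj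
    have hjPQ : (j :: (P ++ Q)).Nodup := List.nodup_middle.1 hL
    have hcyc : IsCycle (j :: P) :=
      ⟨List.cons_ne_nil _ _, hjPQ.sublist ((List.sublist_append_left P Q).cons_cons j)⟩
    calc pathWeight g (j :: (P ++ j :: Q))
        = cycleProd g (j :: P) * pathWeight g (j :: Q) := by
          rw [← List.cons_append, pathWeight_append_cons, cycleProd,
            cycleEdgeProd_eq_pathWeight]
      _ ≤ 1 * pathWeight g (j :: Q) :=
          mul_le_mul_of_nonneg_right (hcycle _ hcyc) (pathWeight_nonneg g hg _)
      _ ≤ potential g j := by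
          rw [one_mul]
          exact pathWeight_le_potential g (hL.sublist (List.sublist_append_right P _))
  · exact pathWeight_le_potential g (List.nodup_cons.2 ⟨hj, hL⟩)

lemma mul_potential_le (i j : Fin n) : g i j * potential g i ≤ potential g j := by
  obtain ⟨L, hL, hmax⟩ := exists_pathWeight_eq_potential g i
  rw [hmax, ← pathWeight_cons_cons]
  exact pathWeight_cons_le_potential hg hcycle hL

end Potential

section Contraction

variable {n : ℕ} {a : Fin n → Fin n → ℝ}

lemma cycleProd_div_const (a : Fin n → Fin n → ℝ) (c : ℝ) (C : List (Fin n)) :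
    cycleProd (fun i j => a i j / c) C = cycleProd a C / c ^ C.length := by
  simp [cycleProd, cycleEdgeProd, Finset.prod_div_distrib]

lemma exists_lt_one_cycleProd_lt_pow (hbad : ∀ C, IsCycle C → cycleProd a C < 1) :
    ∃ c, 0 < c ∧ c < 1 ∧ ∀ C, IsCycle C → cycleProd a C < c ^ C.length := by
  have hnear : ∀ᶠ c in 𝓝 (1 : ℝ), ∀ C : {L : List (Fin n) // L.Nodup},
      IsCycle C.1 → cycleProd a C.1 < c ^ C.1.length := by
    refine eventually_all.2 fun C => ?_
    by_cases hC : IsCycle C.1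
    · have hpow : Tendsto (fun c : ℝ => c ^ C.1.length) (𝓝 1) (𝓝 1) := by
        simpa using (continuous_pow C.1.length).tendsto (1 : ℝ)
      filter_upwards [hpow.eventually (lt_mem_nhds (hbad _ hC))] with c hc _ using hc
    · exact Eventually.of_forall fun _ h => absurd h hC
  obtain ⟨c, hc, hc0, hc1⟩ :=
    ((hnear.filter_mono nhdsWithin_le_nhds).and (Ioo_mem_nhdsLT zero_lt_one)).exists
  exact ⟨c, hc0, hc1, fun C hC => hc ⟨C, hC.2⟩ hC⟩

lemma exists_contracting_potential (ha : Nonneg a)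
    (hbad : ∀ C, IsCycle C → cycleProd a C < 1) :
    ∃ c, 0 < c ∧ c < 1 ∧ ∃ w : Fin n → ℝ, (∀ j, 1 ≤ w j) ∧ ∀ i j, a i j * w i ≤ c * w j := by
  obtain ⟨c, hc0, hc1, hcyc⟩ := exists_lt_one_cycleProd_lt_pow hbad
  have hg : ∀ i j, 0 ≤ a i j / c := fun i j => div_nonneg (ha i j) hc0.le
  have hgcyc : ∀ C, IsCycle C → cycleProd (fun i j => a i j / c) C ≤ 1 := fun C hC => by
    rw [cycleProd_div_const, div_le_one (pow_pos hc0 _)]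
    exact (hcyc C hC).le
  refine ⟨c, hc0, hc1, potential fun i j => a i j / c, one_le_potential _, fun i j => ?_⟩
  have := mul_potential_le hg hgcyc i j
  rwa [div_mul_eq_mul_div, div_le_iff₀ hc0, mul_comm (potential _ j)] at this

end Contraction

section Mechanism

variable {n : ℕ} {a : Fin n → Fin n → ℝ} {β : ℕ → Fin n → Fin n → ℝ} {x : ℕ → Fin n → ℝ}

lemma MechEvolution.nonneg (hx : MechEvolution a β x) (ha : Nonneg a)
    (hβ : ∀ t i j, 0 ≤ β t i j) (hx0 : ∀ i, 0 ≤ x 0 i) : ∀ t i, 0 ≤ x t i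
  | 0 => hx0
  | t + 1 => fun i => by
    rw [hx t i]
    exact Finset.sum_nonneg fun j _ =>
      mul_nonneg (mul_nonneg (ha i j) (hβ t i j)) (hx.nonneg ha hβ hx0 t j)

lemma MechEvolution.weighted_sum_succ_le (hx : MechEvolution a β x) (hβ : IsMechanism β)
    {t : ℕ} (hxt : ∀ j, 0 ≤ x t j) {c : ℝ} {w : Fin n → ℝ} (hc : 0 ≤ c) (hw : ∀ j, 0 ≤ w j)
    (hpot : ∀ i j, a i j * w i ≤ c * w j) :
    ∑ i, w i * x (t + 1) i ≤ c * ∑ j, w j * x t j :=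
  calc ∑ i, w i * x (t + 1) i
      = ∑ j, ∑ i, a i j * w i * (β t i j * x t j) := by
        simp only [hx t, Finset.mul_sum]
        rw [Finset.sum_comm]
        exact Finset.sum_congr rfl fun j _ => Finset.sum_congr rfl fun i _ => by ring
    _ ≤ ∑ j, ∑ i, c * w j * (β t i j * x t j) :=
        Finset.sum_le_sum fun j _ => Finset.sum_le_sum fun i _ =>
          mul_le_mul_of_nonneg_right (hpot i j) (mul_nonneg (hβ.1 t i j) (hxt j))
    _ = ∑ j, c * w j * x t j * ∑ i, β t i j := Finset.sum_congr rfl fun j _ => by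
        rw [Finset.mul_sum]
        exact Finset.sum_congr rfl fun i _ => by ring
    _ ≤ ∑ j, c * w j * x t j := Finset.sum_le_sum fun j _ =>
        mul_le_of_le_one_right (mul_nonneg (mul_nonneg hc (hw j)) (hxt j)) (hβ.2 t j)
    _ = c * ∑ j, w j * x t j := by
        rw [Finset.mul_sum]
        ring_nf

lemma MechEvolution.tendsto_sum_zero (hx : MechEvolution a β x) (ha : Nonneg a)
    (hβ : IsMechanism β) (hx0 : ∀ i, 0 ≤ x 0 i) {c : ℝ} {w : Fin n → ℝ} (hc0 : 0 ≤ c)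
    (hc1 : c < 1) (hw : ∀ j, 1 ≤ w j) (hpot : ∀ i j, a i j * w i ≤ c * w j) :
    Tendsto (fun t => ∑ i, x t i) atTop (𝓝 0) := by
  have hxnn := hx.nonneg ha hβ.1 hx0
  have hw0 : ∀ j, 0 ≤ w j := fun j => zero_le_one.trans (hw j)
  have hdecay (t : ℕ) : ∑ j, w j * x t j ≤ c ^ t * ∑ j, w j * x 0 j := by
    induction t with
    | zero => simp
    | succ t ih => calc
        _ ≤ c * ∑ j, w j * x t j := hx.weighted_sum_succ_le hβ (hxnn t) hc0 hw0 hpot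
        _ ≤ c * (c ^ t * ∑ j, w j * x 0 j) := mul_le_mul_of_nonneg_left ih hc0
        _ = c ^ (t + 1) * ∑ j, w j * x 0 j := by ring
  refine squeeze_zero (g := fun t => c ^ t * ∑ j, w j * x 0 j)
    (fun t => Finset.sum_nonneg fun i _ => hxnn t i) (fun t => ?_) ?_
  · exact (Finset.sum_le_sum fun i _ => le_mul_of_one_le_left (hxnn t i) (hw i)).trans (hdecay t)
  · simpa using (tendsto_pow_atTop_nhds_zero_of_lt_one hc0 hc1).mul_const (∑ j, w j * x 0 j)

lemma MechEvolution.cycleProd_mul_prod_le (hx : MechEvolution a β x) (ha : Nonneg a) {t : ℕ}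
    (hβ : ∀ i j, 0 ≤ β t i j) (hxt : ∀ j, 0 ≤ x t j) {C : List (Fin n)}
    (hcycle : ∀ i j, IsEdgeOf C i j → β t i j = 1) :
    cycleProd a C * ∏ m, x t (C.get m) ≤ ∏ m, x (t + 1) (C.get m) := by
  have hedge (m : Fin C.length) : a (C.get (finRotate _ m)) (C.get m) * x t (C.get m)
      ≤ x (t + 1) (C.get (finRotate _ m)) := by
    set i := C.get (finRotate _ m)
    calc a i (C.get m) * x t (C.get m) = a i (C.get m) * β t i (C.get m) * x t (C.get m) := by
          rw [hcycle _ _ (isEdgeOf_get_finRotate C m), mul_one]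
      _ ≤ ∑ j, a i j * β t i j * x t j :=
          Finset.single_le_sum (f := fun j => a i j * β t i j * x t j)
            (fun j _ => mul_nonneg (mul_nonneg (ha i j) (hβ i j)) (hxt j)) (Finset.mem_univ _)
      _ = x (t + 1) i := (hx t i).symm
  calc cycleProd a C * ∏ m, x t (C.get m)
      = ∏ m, a (C.get (finRotate _ m)) (C.get m) * x t (C.get m) := by
        rw [cycleProd, cycleEdgeProd_eq_prod_finRotate, Finset.prod_mul_distrib]
    _ ≤ ∏ m, x (t + 1) (C.get (finRotate _ m)) :=
        Finset.prod_le_prod (fun m _ => mul_nonneg (ha _ _) (hxt _)) fun m _ => hedge m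
    _ = ∏ m, x (t + 1) (C.get m) := Equiv.prod_comp (finRotate _) fun m => x (t + 1) (C.get m)

end Mechanism

section CycleMechanism

variable {n : ℕ}

noncomputable def trajectory (a : Fin n → Fin n → ℝ) (β : ℕ → Fin n → Fin n → ℝ)
    (x₀ : Fin n → ℝ) : ℕ → Fin n → ℝ
  | 0 => x₀
  | t + 1 => fun i => ∑ j, a i j * β t i j * trajectory a β x₀ t j

lemma mechEvolution_trajectory (a : Fin n → Fin n → ℝ) (β : ℕ → Fin n → Fin n → ℝ)
    (x₀ : Fin n → ℝ) : MechEvolution a β (trajectory a β x₀) :=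
  fun _ _ => rfl

open Classical in
noncomputable def cycleMechanism (C : List (Fin n)) : ℕ → Fin n → Fin n → ℝ :=
  fun _ i j => if IsEdgeOf C i j then 1 else 0

lemma isMechanism_cycleMechanism {C : List (Fin n)} (hC : C.Nodup) :
    IsMechanism (cycleMechanism C) := by
  classical
  refine ⟨fun t i j => by unfold cycleMechanism; split_ifs <;> norm_num, fun t j => ?_⟩
  simp only [cycleMechanism, Finset.sum_boole]
  exact_mod_cast Finset.card_le_one.2 fun i hi i' hi' =>
    IsEdgeOf.eq_of_nodup hC (Finset.mem_filter.1 hi).2 (Finset.mem_filter.1 hi').2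

lemma exists_mechanism_one_le_sum {a : Fin n → Fin n → ℝ} {C : List (Fin n)}
    (ha : Nonneg a) (hC : IsCycle C) (hgood : 1 ≤ cycleProd a C) :
    ∃ (β : ℕ → Fin n → Fin n → ℝ) (x : ℕ → Fin n → ℝ), IsMechanism β ∧ (∀ i, 0 < x 0 i) ∧
      MechEvolution a β x ∧ ∀ t, 1 ≤ ∑ i, x t i := by
  set β := cycleMechanism C
  set x := trajectory a β 1
  have hβ : IsMechanism β := isMechanism_cycleMechanism hC.2
  have hx : MechEvolution a β x := mechEvolution_trajectory a β 1
  have hxnn := hx.nonneg ha hβ.1 fun _ => zero_le_one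
  refine ⟨β, x, hβ, fun _ => one_pos, hx, fun t => ?_⟩
  have hgrowth (t : ℕ) : cycleProd a C ^ t ≤ ∏ m, x t (C.get m) := by
    induction t with
    | zero => simp [x, trajectory]
    | succ t ih => calc
        cycleProd a C ^ (t + 1) = cycleProd a C * cycleProd a C ^ t := pow_succ' _ _
        _ ≤ cycleProd a C * ∏ m, x t (C.get m) :=
            mul_le_mul_of_nonneg_left ih (zero_le_one.trans hgood)
        _ ≤ ∏ m, x (t + 1) (C.get m) :=
            hx.cycleProd_mul_prod_le ha (hβ.1 t) (hxnn t) fun _ _ h => if_pos h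
  have hsum : 1 ≤ (∑ i, x t i) ^ C.length := calc
    1 ≤ cycleProd a C ^ t := one_le_pow₀ hgood
    _ ≤ ∏ m, x t (C.get m) := hgrowth t
    _ ≤ ∏ _m : Fin C.length, ∑ i, x t i := Finset.prod_le_prod (fun m _ => hxnn t _)
        fun m _ => Finset.single_le_sum (fun i _ => hxnn t i) (Finset.mem_univ _)
    _ = (∑ i, x t i) ^ C.length := by simp
  exact (one_le_pow_iff_of_nonneg (Finset.sum_nonneg fun i _ => hxnn t i)
    (List.length_pos_iff.2 hC.1).ne').1 hsum

end CycleMechanism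

/-- An economy vanishes under every mechanism iff every cycle is bad
(product of weights strictly less than one). -/
theorem vanishes_under_every_mechanism_iff_all_cycles_bad
    {n : ℕ} (a : Fin n → Fin n → ℝ) (ha : Nonneg a) :
    (∀ (β : ℕ → Fin n → Fin n → ℝ) (x : ℕ → Fin n → ℝ),
        IsMechanism β → (∀ i, 0 < x 0 i) → MechEvolution a β x →
        Tendsto (fun t => ∑ i, x t i) atTop (nhds 0)) ↔
      ∀ C : List (Fin n), IsCycle C → cycleProd a C < 1 := by
  constructor
  · intro hvanish C hC
    by_contra! hgood
    obtain ⟨β, x, hβ, hx0, hx, hsum⟩ := exists_mechanism_one_le_sum ha hC hgood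
    have := ge_of_tendsto' (hvanish β x hβ hx0 hx) hsum
    norm_num at this
  · intro hbad β x hβ hx0 hx
    obtain ⟨c, hc0, hc1, w, hw, hpot⟩ := exists_contracting_potential ha hbad
    exact hx.tendsto_sum_zero ha hβ (fun i => (hx0 i).le) hc0.le hc1 hw hpot
end ExpandingEconomy
end

section
/- Consider any two-player economy in which every cycle has product one, i.e., a_{1,1} = a_{2,2} = 1 and a_{1,2}·a_{2,1} = 1 with a_{1,2} > 0. Then under trading post with proportional bid updates, for any initial amounts x_1(0), x_2(0) > 0 and any initial budgets B_1(0), B_2(0) > 0 with B_1(0) + B_2(0) = 1, if each player starts by splitting its budget equally between the two goods (b_{i,1}(0) = b_{i,2}(0) = B_i(0)/2), the dynamics cycle with period 3: x_i(t+3) = x_i(t) and b_{i,j}(t+3) = b_{i,j}(t) for all i, j and all t. -/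
open Filter

namespace ExpandingEconomy

/-!
Measuring good `j` in units of value `v j`, where `a i j = v j / v i`, turns the economy into the
one with all coefficients equal to one, and leaves the bids unchanged. In that economy, bids of the
rank-one form `b i j = u i * w j` with `∑ u = 1` are carried by one round to bids `w i * p j`,
where `p = x / ∑ x`, while the amounts become `(∑ x) • u`. So the round permutes the three
probability vectors `(u, w, p)` cyclically and conserves `∑ x`; after three rounds everything is back.
-/

section

variable {n : ℕ} {a : Fin n → Fin n → ℝ} {x : ℕ → Fin n → ℝ} {b : ℕ → Fin n → Fin n → ℝ}

lemma tpBudget_succ (t : ℕ) (i : Fin n) : tpBudget b (t + 1) i = ∑ k, b t k i := rfl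

lemma tpY_of_pos {t : ℕ} {i j : Fin n} (h : 0 < b t i j) :
    tpY x b t i j = b t i j / (∑ k, b t k j) * x t j :=
  if_pos h

lemma tpY_mul_left (v : Fin n → ℝ) (t : ℕ) (i j : Fin n) :
    tpY (fun t j => v j * x t j) b t i j = v j * tpY x b t i j := by
  unfold tpY
  split_ifs <;> ring

namespace TPDynamics

lemma succ_eq_succ (h : TPDynamics a x b) {s t : ℕ} (hx : x s = x t) (hb : b s = b t) :
    x (s + 1) = x (t + 1) ∧ b (s + 1) = b (t + 1) := by
  have hy : tpY x b s = tpY x b t := by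
    funext i j
    simp only [tpY, hx, hb]
  have hx' : x (s + 1) = x (t + 1) := by
    funext i
    rw [(h s).1, (h t).1, hy]
  refine ⟨hx', ?_⟩
  funext i j
  rw [(h s).2, (h t).2, tpBudget_succ, tpBudget_succ, hy, hx', hb]

lemma add_period (h : TPDynamics a x b) {p : ℕ} (hx : x p = x 0) (hb : b p = b 0) (t : ℕ) :
    x (t + p) = x t ∧ b (t + p) = b t := by
  induction t with
  | zero => simpa using ⟨hx, hb⟩
  | succ t ih =>
    rw [Nat.add_right_comm]
    exact h.succ_eq_succ ih.1 ih.2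

lemma rescale {v : Fin n → ℝ} (hv : ∀ i, v i ≠ 0) (h : TPDynamics a x b) :
    TPDynamics (fun i j => v i * a i j / v j) (fun t j => v j * x t j) b := by
  intro t
  refine ⟨fun i => ?_, fun i j => ?_⟩
  · simp only [tpY_mul_left, (h t).1 i, Finset.mul_sum]
    refine Finset.sum_congr rfl fun j _ => ?_
    field_simp [hv j]
  · rw [(h t).2 i j, tpY_mul_left]
    field_simp [hv i, hv j]

lemma rankOne_step (h : TPDynamics (fun _ _ => 1) x b) {t : ℕ} {S : ℝ} {u w p : Fin n → ℝ}
    (hS : 0 < S) (hu : ∀ i, 0 < u i) (hw : ∀ j, 0 < w j) (hu1 : ∑ i, u i = 1)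
    (hp1 : ∑ j, p j = 1) (hx : x t = fun j => S * p j) (hb : b t = fun i j => u i * w j) :
    x (t + 1) = (fun i => S * u i) ∧ b (t + 1) = fun i j => w i * p j := by
  have hσ : ∀ j, ∑ k, b t k j = w j := by
    simp [hb, ← Finset.sum_mul, hu1]
  have hy : ∀ i j, tpY x b t i j = u i * (S * p j) := by
    intro i j
    have hpos : 0 < b t i j := by rw [hb]; exact mul_pos (hu i) (hw j)
    rw [tpY_of_pos hpos, hσ, hb, hx]
    field_simp [(hw j).ne']
  have hx' : x (t + 1) = fun i => S * u i := by
    funext i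
    simp only [(h t).1 i, hy, one_mul, ← Finset.mul_sum, hp1]
    ring
  refine ⟨hx', ?_⟩
  funext i j
  rw [(h t).2 i j, hy, hx', tpBudget_succ, hσ]
  field_simp [hS.ne', (hu i).ne']

theorem periodic_three_of_rankOne (h : TPDynamics (fun _ _ => 1) x b) {u w : Fin n → ℝ}
    (hu : ∀ i, 0 < u i) (hw : ∀ j, 0 < w j) (hu1 : ∑ i, u i = 1) (hw1 : ∑ j, w j = 1)
    (hx0 : ∀ j, 0 < x 0 j) (hb0 : b 0 = fun i j => u i * w j) (t : ℕ) :
    x (t + 3) = x t ∧ b (t + 3) = b t := by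
  have hne : (Finset.univ : Finset (Fin n)).Nonempty :=
    Finset.nonempty_of_sum_ne_zero (hu1 ▸ one_ne_zero)
  set S := ∑ j, x 0 j
  have hS : 0 < S := Finset.sum_pos (fun j _ => hx0 j) hne
  set p : Fin n → ℝ := fun j => x 0 j / S
  have hp : ∀ j, 0 < p j := fun j => div_pos (hx0 j) hS
  have hp1 : ∑ j, p j = 1 := by
    simp only [p, ← Finset.sum_div]
    exact div_self hS.ne'
  have hxS : x 0 = fun j => S * p j := by
    funext j
    exact (mul_div_cancel₀ _ hS.ne').symm
  obtain ⟨hx1, hb1⟩ := h.rankOne_step hS hu hw hu1 hp1 hxS hb0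
  obtain ⟨hx2, hb2⟩ := h.rankOne_step hS hw hp hw1 hu1 hx1 hb1
  obtain ⟨hx3, hb3⟩ := h.rankOne_step hS hp hu hp1 hw1 hx2 hb2
  exact h.add_period (hx3.trans hxS.symm) (hb3.trans hb0.symm) t

theorem periodic_three_of_potential {v : Fin n → ℝ} (hv : ∀ i, 0 < v i)
    (ha : ∀ i j, a i j = v j / v i) (h : TPDynamics a x b) {u w : Fin n → ℝ}
    (hu : ∀ i, 0 < u i) (hw : ∀ j, 0 < w j) (hu1 : ∑ i, u i = 1) (hw1 : ∑ j, w j = 1)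
    (hx0 : ∀ j, 0 < x 0 j) (hb0 : b 0 = fun i j => u i * w j) (t : ℕ) :
    x (t + 3) = x t ∧ b (t + 3) = b t := by
  have hone : (fun i j => v i * a i j / v j) = fun _ _ => (1 : ℝ) := by
    funext i j
    rw [ha]
    field_simp [(hv i).ne', (hv j).ne']
  have h' := h.rescale fun i => (hv i).ne'
  rw [hone] at h'
  obtain ⟨hx, hb⟩ := h'.periodic_three_of_rankOne hu hw hu1 hw1
    (fun j => mul_pos (hv j) (hx0 j)) hb0 t
  refine ⟨funext fun j => ?_, hb⟩
  exact mul_left_cancel₀ (hv j).ne' (congrFun hx j)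

end TPDynamics

end

/-- In a two-player economy where every cycle has product one, if each
player starts by splitting its budget equally between the two goods, the trading post
dynamics cycle with period 3. -/
theorem two_player_period_three
    (a : Fin 2 → Fin 2 → ℝ)
    (h00 : a 0 0 = 1) (h11 : a 1 1 = 1) (h01 : 0 < a 0 1) (hprod : a 0 1 * a 1 0 = 1)
    (x : ℕ → Fin 2 → ℝ) (b : ℕ → Fin 2 → Fin 2 → ℝ) (B : Fin 2 → ℝ)
    (hB : ∀ i, 0 < B i) (hBsum : B 0 + B 1 = 1)
    (hx0 : ∀ i, 0 < x 0 i)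
    (hb0 : ∀ i j, b 0 i j = B i / 2)
    (hdyn : TPDynamics a x b) :
    ∀ t : ℕ, (∀ i, x (t + 3) i = x t i) ∧ ∀ i j, b (t + 3) i j = b t i j := by
  have hv : ∀ i, 0 < ![1, a 0 1] i := by
    simp [Fin.forall_fin_two, h01]
  have ha : ∀ i j, a i j = ![1, a 0 1] j / ![1, a 0 1] i := by
    simp only [Fin.forall_fin_two]
    refine ⟨⟨by simp [h00], by simp⟩, ?_, by simp [h11, h01.ne']⟩
    simpa using eq_inv_of_mul_eq_one_right hprod
  have hb0' : b 0 = fun i j => B i * (1 / 2) := by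
    funext i j
    rw [hb0, div_eq_mul_one_div]
  intro t
  obtain ⟨hx, hb⟩ := hdyn.periodic_three_of_potential hv ha hB (fun _ => one_half_pos)
    (by rwa [Fin.sum_univ_two]) (by norm_num) hx0 hb0' t
  exact ⟨congrFun hx, fun i j => congrFun (congrFun hb i) j⟩
end ExpandingEconomy
end
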